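/- Let k be a field, C a coalgebra over k with comultiplication Δ and counit ε, M and N k-vector spaces, and π : C → End_k(M), σ : C → End_k(N) k-linear maps. Define π' : C → End_k(M ⊗ N) as the composite of Δ : C → C ⊗ C, the map π ⊗ σ : C ⊗ C → End_k(M) ⊗ End_k(N), and the canonical map End_k(M) ⊗ End_k(N) → End_k(M ⊗ N). If there exists a nonzero vector ξ ∈ M with π(x)ξ = ε(x)·ξ for all x ∈ C, and if σ is injective, then π' is injective. -/

import Mathlib

open TensorProduct

/-- The tensor product of two "representations" `π : C → End M`, `σ : C → End N` of a
coalgebra `C`: the composite of `Δ : C → C ⊗ C`, `π ⊗ σ`, and the canonical map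
`End(M) ⊗ End(N) → End(M ⊗ N)`. -/
noncomputable def tensorProdRep (k : Type*) [CommRing k]
    (C : Type*) [AddCommGroup C] [Module k C] [Coalgebra k C]
    {M N : Type*} [AddCommGroup M] [Module k M] [AddCommGroup N] [Module k N]
    (π : C →ₗ[k] M →ₗ[k] M) (σ : C →ₗ[k] N →ₗ[k] N) :
    C →ₗ[k] (M ⊗[k] N →ₗ[k] M ⊗[k] N) :=
  TensorProduct.homTensorHomMap (RingHom.id k) M N M N ∘ₗ TensorProduct.map π σ ∘ₗ
    Coalgebra.comul

/-!
If `ξ` is invariant for `π`, i.e. `π(x)ξ = ε(x)ξ`, then counitality `(ε ⊗ id)Δ = id` gives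
`π'(x)(ξ ⊗ n) = ξ ⊗ σ(x)n`. So `π'` restricted to the copy `ξ ⊗ N` of `N` is `σ`, and over a
field `n ↦ ξ ⊗ n` is injective for `ξ ≠ 0` (a functional with `f ξ = 1` splits it).
-/

section

variable {k M N : Type*} [CommRing k] [AddCommGroup M] [Module k M] [AddCommGroup N] [Module k N]

theorem TensorProduct.mk_injective_of_dual_apply_eq_one {f : Module.Dual k M} {ξ : M}
    (hf : f ξ = 1) : Function.Injective (TensorProduct.mk k M N ξ) :=
  Function.LeftInverse.injective (g := TensorProduct.lid k N ∘ₗ f.rTensor N) fun n => by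
    simp [hf]

theorem tensorProdRep_apply_tmul_of_invariant {C : Type*} [AddCommGroup C] [Module k C]
    [Coalgebra k C] (π : C →ₗ[k] M →ₗ[k] M) (σ : C →ₗ[k] N →ₗ[k] N) {ξ : M}
    (hξ : ∀ x : C, π x ξ = Coalgebra.counit (R := k) x • ξ) (x : C) (n : N) :
    tensorProdRep k C π σ x (ξ ⊗ₜ n) = ξ ⊗ₜ σ x n := by
  have hmap : ∀ c : C ⊗[k] C,
      homTensorHomMap (RingHom.id k) M N M N (map π σ c) (ξ ⊗ₜ n) =
        ξ ⊗ₜ σ (TensorProduct.lid k C (Coalgebra.counit.rTensor C c)) n := by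
    intro c
    induction c using TensorProduct.induction_on with
    | zero => simp
    | tmul a b => simp [hξ a, smul_tmul]
    | add c₁ c₂ h₁ h₂ => simp [h₁, h₂, tmul_add]
  simp [tensorProdRep, hmap, Coalgebra.rTensor_counit_comul]

end

/-- Let `C` be a coalgebra over a field `k`, `M`, `N` vector spaces
over `k`, `π : C → End(M)`, `σ : C → End(N)` linear maps, and
`π' = (canonical) ∘ (π ⊗ σ) ∘ Δ : C → End(M ⊗ N)`.  If some nonzero `ξ ∈ M`
satisfies `π(x)ξ = ε(x)·ξ` for all `x ∈ C` and `σ` is injective, then `π'` is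
injective. -/
theorem tensorProdRep_injective
    (k : Type*) [Field k]
    (C : Type*) [AddCommGroup C] [Module k C] [Coalgebra k C]
    (M N : Type*) [AddCommGroup M] [Module k M] [AddCommGroup N] [Module k N]
    (π : C →ₗ[k] M →ₗ[k] M) (σ : C →ₗ[k] N →ₗ[k] N)
    (ξ : M) (hξ0 : ξ ≠ 0)
    (hξ : ∀ x : C, π x ξ = (Coalgebra.counit (R := k) x) • ξ)
    (hσ : Function.Injective σ) :
    Function.Injective (tensorProdRep k C π σ) := by
  obtain ⟨f, hf⟩ := Module.Projective.exists_dual_eq_one k hξ0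
  intro x y hxy
  refine hσ <| LinearMap.ext fun n =>
    TensorProduct.mk_injective_of_dual_apply_eq_one (N := N) hf ?_
  simp only [TensorProduct.mk_apply, ← tensorProdRep_apply_tmul_of_invariant π σ hξ, hxy]
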